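/- arXiv:2107.04693 — 5 statements merged into one kernel-verified Lean document; each statement's English description precedes it below -/
import Mathlib

section
/- Let g : ℝⁿ → E be differentiable at x̄ with E a finite-dimensional inner product space, let K ⊆ E be a closed convex cone with g(x̄) ∈ K, let L = {d ∈ ℝⁿ : Dg(x̄)d ∈ T_K(g(x̄))} be the linearized cone and H = Dg(x̄)ᵀ[N_K(g(x̄))] the image of the normal cone under the adjoint of the derivative. Then the polar of L equals the closure of H. -/
/-!
For any continuous linear map `A` and set `S`, polarity turns images under the adjoint into
preimages: `(A† S)° = A⁻¹ (S°)`. Writing `T` for the tangent cone, a closed convex cone, the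
bipolar theorem `T°° = T` gives `A⁻¹ T = (A† T°)° = (cl (A† T°))°`, and since `cl (A† T°)` is
again a closed convex cone, a second application of the bipolar theorem yields
`(A⁻¹ T)° = cl (A† T°)`, which for `A = Dg(x̄)` is the claim.
-/

open scoped RealInnerProductSpace

/-- Polar of a set in a real inner product space. -/
def polarSet {E : Type*} [NormedAddCommGroup E] [InnerProductSpace ℝ E] (S : Set E) : Set E :=
  {z | ∀ y ∈ S, ⟪z, y⟫ ≤ 0}

/-- Tangent cone to a convex set `K` at `y`: the closure of the cone of feasible directions. -/
def tangentConeCvx {E : Type*} [NormedAddCommGroup E] [InnerProductSpace ℝ E]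
    (K : Set E) (y : E) : Set E :=
  closure {w | ∃ c : ℝ, 0 ≤ c ∧ ∃ k ∈ K, w = c • (k - y)}

open ProperCone

section Polar

variable {E F : Type*} [NormedAddCommGroup E] [InnerProductSpace ℝ E]
  [NormedAddCommGroup F] [InnerProductSpace ℝ F]

lemma polarSet_closure (S : Set E) : polarSet (closure S) = polarSet S := by
  refine subset_antisymm (fun z hz y hy ↦ hz y (subset_closure hy)) fun z hz y hy ↦ ?_
  have hclosed : IsClosed {y | ⟪z, y⟫ ≤ 0} := isClosed_le (by fun_prop) continuous_const
  exact closure_minimal hz hclosed hy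

variable [CompleteSpace E] [CompleteSpace F]

lemma polarSet_eq_innerDual_neg (S : Set E) : polarSet S = innerDual (-S) := by
  ext z
  simp [polarSet, mem_innerDual, real_inner_comm z]

lemma neg_polarSet (S : Set E) : -polarSet S = innerDual S := by
  ext z
  simp [polarSet, mem_innerDual, real_inner_comm z]

lemma polarSet_polarSet (C : ProperCone ℝ E) : polarSet (polarSet (C : Set E)) = C := by
  rw [polarSet_eq_innerDual_neg, neg_polarSet, innerDual_innerDual]

lemma polarSet_image_adjoint (A : F →L[ℝ] E) (S : Set E) :
    polarSet (A.adjoint '' S) = A ⁻¹' polarSet S := by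
  ext z
  simp [polarSet, ContinuousLinearMap.adjoint_inner_right]

theorem polarSet_preimage_eq_closure_image_adjoint (A : F →L[ℝ] E) (C : ProperCone ℝ E) :
    polarSet (A ⁻¹' C) = closure (A.adjoint '' polarSet C) := by
  have hmap :
      closure (A.adjoint '' polarSet C) = ((innerDual (-C : Set E)).map A.adjoint : Set F) := by
    rw [polarSet_eq_innerDual_neg]; rfl
  calc polarSet (A ⁻¹' C)
      = polarSet (A ⁻¹' polarSet (polarSet C)) := by rw [polarSet_polarSet]
    _ = polarSet (polarSet (closure (A.adjoint '' polarSet C))) := by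
        rw [polarSet_closure, polarSet_image_adjoint]
    _ = closure (A.adjoint '' polarSet C) := by rw [hmap, polarSet_polarSet]

end Polar

section TangentCone

variable {E : Type*} [NormedAddCommGroup E] [InnerProductSpace ℝ E] {K : Set E} {y : E}

def feasibleDirections (hK : Convex ℝ K) (hy : y ∈ K) : PointedCone ℝ E where
  carrier := {w | ∃ c : ℝ, 0 ≤ c ∧ ∃ k ∈ K, w = c • (k - y)}
  zero_mem' := ⟨0, le_rfl, y, hy, by simp⟩
  smul_mem' := by
    rintro c _ ⟨a, ha, k, hk, rfl⟩
    exact ⟨c * a, mul_nonneg c.2 ha, k, hk, smul_smul (c : ℝ) a _⟩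
  add_mem' := by
    rintro _ _ ⟨a, ha, k, hk, rfl⟩ ⟨b, hb, l, hl, rfl⟩
    rcases (add_nonneg ha hb).eq_or_lt with hab | hab
    · obtain ⟨rfl, rfl⟩ := (add_eq_zero_iff_of_nonneg ha hb).1 hab.symm
      exact ⟨0, le_rfl, k, hk, by simp⟩
    · refine ⟨a + b, hab.le, _, convex_iff_div.1 hK hk hl ha hb hab, ?_⟩
      match_scalars
      · field_simp
      · ring
      · field_simp

def tangentProperCone (hK : Convex ℝ K) (hy : y ∈ K) : ProperCone ℝ E :=
  Submodule.closure (feasibleDirections hK hy)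

lemma coe_tangentProperCone (hK : Convex ℝ K) (hy : y ∈ K) :
    (tangentProperCone hK hy : Set E) = tangentConeCvx K y :=
  rfl

end TangentCone

theorem stmt1_general {n : ℕ} {E : Type*} [NormedAddCommGroup E] [InnerProductSpace ℝ E]
    [FiniteDimensional ℝ E] (K : Set E) (hconv : Convex ℝ K)
    (g : EuclideanSpace ℝ (Fin n) → E) (x0 : EuclideanSpace ℝ (Fin n))
    (Dg : EuclideanSpace ℝ (Fin n) →L[ℝ] E)
    (hfeas : g x0 ∈ K) :
    polarSet {d | Dg d ∈ tangentConeCvx K (g x0)} =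
      closure (⇑(ContinuousLinearMap.adjoint Dg) ''
        polarSet (tangentConeCvx K (g x0))) := by
  rw [← coe_tangentProperCone hconv hfeas]
  exact polarSet_preimage_eq_closure_image_adjoint Dg _

/-- Guignard's lemma: the polar of the linearized cone
`L = {d : Dg(x̄)d ∈ T_K(g(x̄))}` equals the closure of
`H = Dg(x̄)ᵀ[N_K(g(x̄))]`. -/
theorem stmt1 {n : ℕ} {E : Type*} [NormedAddCommGroup E] [InnerProductSpace ℝ E]
    [FiniteDimensional ℝ E] (K : Set E) (hclosed : IsClosed K) (hconv : Convex ℝ K)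
    (hcone : ∀ x ∈ K, ∀ c : ℝ, 0 ≤ c → c • x ∈ K)
    (g : EuclideanSpace ℝ (Fin n) → E) (x0 : EuclideanSpace ℝ (Fin n))
    (Dg : EuclideanSpace ℝ (Fin n) →L[ℝ] E) (hg : HasFDerivAt g Dg x0)
    (hfeas : g x0 ∈ K) :
    polarSet {d | Dg d ∈ tangentConeCvx K (g x0)} =
      closure (⇑(ContinuousLinearMap.adjoint Dg) ''
        polarSet (tangentConeCvx K (g x0))) :=
  stmt1_general K hconv g x0 Dg hfeas
end

section
/- Let x̄ ∈ Ω = g⁻¹(K) be a local minimizer of a differentiable f over Ω, where g : ℝⁿ → E is differentiable and K ⊆ E is a closed convex cone. If T_Ω(x̄)° = L_Ω(x̄)° and H(x̄) = Dg(x̄)ᵀ[N_K(g(x̄))] is closed, then there exists λ̄ ∈ K° with ∇f(x̄) + Dg(x̄)ᵀ λ̄ = 0 and ⟨g(x̄), λ̄⟩ = 0 (KKT conditions). -/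
open scoped RealInnerProductSpace

/-- The Bouligand tangent cone to `S` at `z`. -/
def bouligandCone {E : Type*} [NormedAddCommGroup E] [NormedSpace ℝ E]
    (S : Set E) (z : E) : Set E :=
  {y | ∃ t : ℕ → ℝ, ∃ w : ℕ → E, (∀ k, 0 < t k) ∧
    Filter.Tendsto t Filter.atTop (nhds 0) ∧
    Filter.Tendsto w Filter.atTop (nhds y) ∧
    ∀ k, z + t k • w k ∈ S}

/-!
At a local minimizer `-∇f(x̄)` lies in the polar of the Bouligand tangent cone, hence by
hypothesis in `L_Ω(x̄)°`. With `T = T_K(g(x̄))`, a closed convex cone, the bipolar theorem gives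
`(Dg(x̄)ᵀ T°)° ⊆ Dg(x̄)⁻¹ T = L_Ω(x̄)`, so `L_Ω(x̄)° ⊆ (Dg(x̄)ᵀ T°)°° = Dg(x̄)ᵀ T°`, the last
equality because this image is a closed convex cone. This produces `λ ∈ T°` with
`∇f(x̄) + Dg(x̄)ᵀ λ = 0`. Finally, as `K` is a cone containing `g(x̄)`, both `±g(x̄)` are feasible
directions of `K` at `g(x̄)`, which forces `T° ⊆ K° ∩ g(x̄)^⊥`.
-/

theorem bouligandCone_subset_posTangentConeAt {E : Type*} [NormedAddCommGroup E]
    [NormedSpace ℝ E] (S : Set E) (z : E) :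
    bouligandCone S z ⊆ posTangentConeAt S z := by
  rintro y ⟨t, w, ht, ht0, hw, hmem⟩
  refine mem_tangentConeAt_of_seq Filter.atTop (fun k => (t k)⁻¹.toNNReal)
    (fun k => t k • w k) (by simpa using ht0.smul hw) (Filter.Eventually.of_forall hmem) ?_
  refine hw.congr fun k => ?_
  rw [NNReal.smul_def, Real.coe_toNNReal _ (inv_pos.2 (ht k)).le, smul_smul,
    inv_mul_cancel₀ (ht k).ne', one_smul]

theorem IsLocalMinOn.neg_mem_polarSet_bouligandCone {F : Type*} [NormedAddCommGroup F]
    [InnerProductSpace ℝ F] [CompleteSpace F] {f : F → ℝ} {S : Set F} {x gradf : F}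
    (hmin : IsLocalMinOn f S x) (hgrad : HasGradientAt f gradf x) :
    -gradf ∈ polarSet (bouligandCone S x) := fun d hd => by
  have := hmin.hasFDerivWithinAt_nonneg hgrad.hasFDerivAt.hasFDerivWithinAt
    (bouligandCone_subset_posTangentConeAt S x hd)
  rw [InnerProductSpace.toDual_apply_apply] at this
  rw [inner_neg_left]
  linarith

section
variable {E : Type*} [NormedAddCommGroup E] [InnerProductSpace ℝ E]

theorem polarSet_anti {S T : Set E} (h : S ⊆ T) : polarSet T ⊆ polarSet S :=
  fun _ hz y hy => hz y (h hy)

def polarCone (S : Set E) : ConvexCone ℝ E where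
  carrier := polarSet S
  smul_mem' c hc _ hz y hy := by
    rw [real_inner_smul_left]
    exact mul_nonpos_of_nonneg_of_nonpos hc.le (hz y hy)
  add_mem' _ hz _ hz' y hy := by
    rw [inner_add_left]
    exact add_nonpos (hz y hy) (hz' y hy)

theorem zero_mem_polarSet (S : Set E) : (0 : E) ∈ polarSet S := fun _ _ => by simp

theorem polarSet_polarSet_eq_innerDual [CompleteSpace E] (S : Set E) :
    polarSet (polarSet S) = ProperCone.innerDual (ProperCone.innerDual S : Set E) := by
  ext z
  simp only [polarSet, Set.mem_ofPred_eq, SetLike.mem_coe, ProperCone.mem_innerDual]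
  rw [neg_surjective.forall]
  simp [inner_neg_left, inner_neg_right, real_inner_comm]

theorem ConvexCone.polarSet_polarSet [CompleteSpace E] (C : ConvexCone ℝ E)
    (hne : (C : Set E).Nonempty) (hcl : IsClosed (C : Set E)) :
    polarSet (polarSet (C : Set E)) = C := by
  lift C to ProperCone ℝ E using ⟨hne, hcl⟩
  rw [polarSet_polarSet_eq_innerDual]
  exact congrArg SetLike.coe (ProperCone.innerDual_innerDual C)

theorem ConvexCone.polarSet_preimage_subset_adjoint_image {F : Type*} [NormedAddCommGroup F]
    [InnerProductSpace ℝ F] [CompleteSpace F] [CompleteSpace E] (T : F →L[ℝ] E)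
    (C : ConvexCone ℝ E) (hne : (C : Set E).Nonempty) (hcl : IsClosed (C : Set E))
    (hH : IsClosed (T.adjoint '' polarSet (C : Set E))) :
    polarSet (T ⁻¹' C) ⊆ T.adjoint '' polarSet (C : Set E) := by
  set H : ConvexCone ℝ F := (polarCone (C : Set E)).map (T.adjoint : E →ₗ[ℝ] F)
  have hH_coe : (H : Set F) = T.adjoint '' polarSet (C : Set E) := ConvexCone.coe_map _ _
  have hH_polar : polarSet (H : Set F) ⊆ T ⁻¹' C := fun d hd => by
    rw [Set.mem_preimage, ← C.polarSet_polarSet hne hcl]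
    intro lam hlam
    rw [← ContinuousLinearMap.adjoint_inner_right]
    exact hd _ ⟨lam, hlam, rfl⟩
  calc polarSet (T ⁻¹' C) ⊆ polarSet (polarSet (H : Set F)) := polarSet_anti hH_polar
    _ = H := H.polarSet_polarSet (hH_coe ▸ ⟨0, 0, zero_mem_polarSet _, map_zero _⟩)
        (hH_coe ▸ hH)
    _ = T.adjoint '' polarSet (C : Set E) := hH_coe

variable {K : Set E} {y : E}

theorem ConvexCone.coe_closure_hull_eq_tangentConeCvx (hK : Convex ℝ K) (hy : y ∈ K) :
    ((ConvexCone.hull ℝ ((-y + ·) '' K)).closure : Set E) = tangentConeCvx K y := by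
  rw [ConvexCone.coe_closure, tangentConeCvx]
  congr 1
  ext w
  rw [SetLike.mem_coe, ConvexCone.mem_hull_of_convex (hK.translate (-y))]
  constructor
  · rintro ⟨c, hc, _, ⟨k, hk, rfl⟩, rfl⟩
    exact ⟨c, hc.le, k, hk, by simp only [neg_add_eq_sub]⟩
  · rintro ⟨c, hc, k, hk, rfl⟩
    rcases hc.eq_or_lt with rfl | hc
    · exact ⟨1, one_pos, 0, ⟨y, hy, neg_add_cancel y⟩, by simp⟩
    · exact ⟨c, hc, -y + k, ⟨k, hk, rfl⟩, by simp only [neg_add_eq_sub]⟩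

theorem polarSet_tangentConeCvx_subset (hcone : ∀ x ∈ K, ∀ c : ℝ, 0 ≤ c → c • x ∈ K)
    (hy : y ∈ K) : polarSet (tangentConeCvx K y) ⊆ polarSet K ∩ {lam | ⟪y, lam⟫ = 0} := by
  intro lam hlam
  have hdir : ∀ k ∈ K, ⟪lam, k⟫ ≤ ⟪lam, y⟫ := fun k hk => by
    have := hlam _ (subset_closure ⟨1, zero_le_one, k, hk, (one_smul ℝ _).symm⟩)
    rwa [inner_sub_right, sub_nonpos] at this
  have h0 := hdir 0 (by simpa using hcone y hy 0 le_rfl)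
  have h2 := hdir (2 • y) (hcone y hy 2 zero_le_two)
  rw [inner_zero_right] at h0
  rw [real_inner_smul_right] at h2
  have hly : ⟪lam, y⟫ = 0 := by linarith
  exact ⟨fun k hk => hly ▸ hdir k hk, by rw [Set.mem_ofPred_eq, real_inner_comm, hly]⟩
end

theorem stmt4_general {n : ℕ} {E : Type*} [NormedAddCommGroup E] [InnerProductSpace ℝ E]
    [FiniteDimensional ℝ E] (K : Set E) (hconv : Convex ℝ K)
    (hcone : ∀ x ∈ K, ∀ c : ℝ, 0 ≤ c → c • x ∈ K)
    (f : EuclideanSpace ℝ (Fin n) → ℝ) (g : EuclideanSpace ℝ (Fin n) → E)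
    (x0 : EuclideanSpace ℝ (Fin n))
    (gradf : EuclideanSpace ℝ (Fin n)) (hgrad : HasGradientAt f gradf x0)
    (Dg : EuclideanSpace ℝ (Fin n) →L[ℝ] E)
    (hfeas : x0 ∈ g ⁻¹' K)
    (hmin : IsLocalMinOn f (g ⁻¹' K) x0)
    (hpolar : polarSet (bouligandCone (g ⁻¹' K) x0) =
      polarSet {d | Dg d ∈ tangentConeCvx K (g x0)})
    (hH : IsClosed (⇑(ContinuousLinearMap.adjoint Dg) ''
      polarSet (tangentConeCvx K (g x0)))) :
    ∃ lam ∈ polarSet K, gradf + ContinuousLinearMap.adjoint Dg lam = 0 ∧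
      ⟪g x0, lam⟫ = 0 := by
  set C := (ConvexCone.hull ℝ ((-g x0 + ·) '' K)).closure
  have hC : (C : Set E) = tangentConeCvx K (g x0) :=
    ConvexCone.coe_closure_hull_eq_tangentConeCvx hconv hfeas
  have hC_ne : (C : Set E).Nonempty :=
    ⟨0, subset_closure (ConvexCone.subset_hull ⟨g x0, hfeas, neg_add_cancel _⟩)⟩
  have hgrad_polar : -gradf ∈ polarSet (Dg ⁻¹' C) := by
    rw [hC]
    exact hpolar ▸ hmin.neg_mem_polarSet_bouligandCone hgrad
  obtain ⟨lam, hlam, hDlam⟩ := C.polarSet_preimage_subset_adjoint_image Dg hC_ne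
    (hC ▸ isClosed_closure) (hC ▸ hH) hgrad_polar
  rw [hC] at hlam
  obtain ⟨hlamK, hcompl⟩ := polarSet_tangentConeCvx_subset hcone hfeas hlam
  exact ⟨lam, hlamK, by rw [hDlam, add_neg_cancel], hcompl⟩

/-- Guignard's theorem: if `x̄` is a local minimizer of `f` over `Ω = g⁻¹(K)`,
`T_Ω(x̄)° = L_Ω(x̄)°`, and `H(x̄) = Dg(x̄)ᵀ[N_K(g(x̄))]` is closed, then the
KKT conditions hold at `x̄`. -/
theorem stmt4 {n : ℕ} {E : Type*} [NormedAddCommGroup E] [InnerProductSpace ℝ E]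
    [FiniteDimensional ℝ E] (K : Set E) (hclosed : IsClosed K) (hconv : Convex ℝ K)
    (hcone : ∀ x ∈ K, ∀ c : ℝ, 0 ≤ c → c • x ∈ K)
    (f : EuclideanSpace ℝ (Fin n) → ℝ) (g : EuclideanSpace ℝ (Fin n) → E)
    (x0 : EuclideanSpace ℝ (Fin n))
    (gradf : EuclideanSpace ℝ (Fin n)) (hgrad : HasGradientAt f gradf x0)
    (Dg : EuclideanSpace ℝ (Fin n) →L[ℝ] E) (hg : HasFDerivAt g Dg x0)
    (hfeas : x0 ∈ g ⁻¹' K)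
    (hmin : IsLocalMinOn f (g ⁻¹' K) x0)
    (hpolar : polarSet (bouligandCone (g ⁻¹' K) x0) =
      polarSet {d | Dg d ∈ tangentConeCvx K (g x0)})
    (hH : IsClosed (⇑(ContinuousLinearMap.adjoint Dg) ''
      polarSet (tangentConeCvx K (g x0)))) :
    ∃ lam ∈ polarSet K, gradf + ContinuousLinearMap.adjoint Dg lam = 0 ∧
      ⟪g x0, lam⟫ = 0 :=
  stmt4_general K hconv hcone f g x0 gradf hgrad Dg hfeas hmin hpolar hH
end

section
/- The second-order cone Kₘ = {(z₀, ẑ) ∈ ℝ × ℝ^{m−1} : z₀ ≥ ‖ẑ‖} is facially exposed: for every face F of Kₘ there exists η ∈ Kₘ° (the polar cone) such that F = Kₘ ∩ {η}⊥. -/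
/-!
A face `F` of `Kₘ` either meets the interior of `Kₘ`, in which case it is all of `Kₘ` (`η = 0`),
or lies in the boundary `‖ẑ‖ = z₀`. For `x` on the boundary, the functional
`η x = (-x₀, x̂)` is nonpositive on `Kₘ` by Cauchy–Schwarz, and its zero set in `Kₘ` is the ray
through `x`, because `‖x₀ ẑ - z₀ x̂‖² ≤ 0` as soon as `⟪x̂, ẑ⟫ = x₀ z₀`. Two boundary points whose
sum is again on the boundary are orthogonal to each other's `η`, so a boundary face containing
`x ≠ 0` is exactly that ray. The face `{0}` is cut out by `η = -e₀`.
-/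

open scoped RealInnerProductSpace

/-- The norm of the "hat part" `ẑ` of `z = (z₀, ẑ) ∈ ℝ × ℝ^{m-1}`. -/
noncomputable def hatNorm {m : ℕ} (z : EuclideanSpace ℝ (Fin m)) : ℝ :=
  Real.sqrt (∑ i : Fin m, if (i : ℕ) = 0 then 0 else z i ^ 2)

/-- The second-order cone `Kₘ = {(z₀, ẑ) : z₀ ≥ ‖ẑ‖}`. -/
def SOC (m : ℕ) [NeZero m] : Set (EuclideanSpace ℝ (Fin m)) :=
  {z | hatNorm z ≤ z 0}

/-- `F` is a face of the convex cone `C`. -/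
def IsFace {E : Type*} [AddCommGroup E] [Module ℝ E] (C F : Set E) : Prop :=
  F.Nonempty ∧ F ⊆ C ∧ Convex ℝ F ∧
    ∀ y ∈ F, ∀ z ∈ C, ∀ w ∈ C, ∀ α : ℝ, 0 < α → α < 1 →
      y = α • z + (1 - α) • w → z ∈ F ∧ w ∈ F

section ConeFace

variable {E : Type*} [AddCommGroup E] [Module ℝ E] {C F : Set E}

theorem IsFace.mem_of_sub_mem (hC : ∀ z ∈ C, ∀ t : ℝ, 0 ≤ t → t • z ∈ C) (hF : IsFace C F)
    {y z : E} (hy : y ∈ F) (hz : z ∈ C) (hyz : y - z ∈ C) : z ∈ F := by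
  obtain ⟨-, hFC, hconv, hface⟩ := hF
  have two_smul_mem : ∀ u ∈ C, y - u ∈ C → (2 : ℝ) • u ∈ F := fun u hu hyu =>
    (hface y hy _ (hC u hu 2 zero_le_two) _ (hC _ hyu 2 zero_le_two) (1 / 2) (by norm_num)
      (by norm_num) (by module)).1
  have hzero : (0 : E) ∈ F := by
    simpa using two_smul_mem 0 (by simpa using hC y (hFC hy) 0 le_rfl) (by simpa using hFC hy)
  have hmid := hconv hzero (two_smul_mem z hz hyz) (by norm_num : (0 : ℝ) ≤ 1 / 2)
    (by norm_num : (0 : ℝ) ≤ 1 / 2) (by norm_num)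
  convert hmid using 1
  module

theorem IsFace.zero_mem (hC : ∀ z ∈ C, ∀ t : ℝ, 0 ≤ t → t • z ∈ C) (hF : IsFace C F) :
    (0 : E) ∈ F := by
  obtain ⟨y, hy⟩ := hF.1
  exact hF.mem_of_sub_mem hC hy (by simpa using hC y (hF.2.1 hy) 0 le_rfl)
    (by simpa using hF.2.1 hy)

theorem IsFace.smul_mem (hC : ∀ z ∈ C, ∀ t : ℝ, 0 ≤ t → t • z ∈ C) (hF : IsFace C F)
    {x : E} (hx : x ∈ F) {t : ℝ} (ht : 0 ≤ t) : t • x ∈ F := by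
  have hxC := hF.2.1 hx
  rcases le_or_gt t 1 with ht1 | ht1
  · refine hF.mem_of_sub_mem hC hx (hC x hxC t ht) ?_
    convert hC x hxC (1 - t) (by linarith) using 1
    module
  · have ht0 : 0 < t := by linarith
    refine (hF.2.2.2 x hx (t • x) (hC x hxC t ht) 0 (by simpa using hC x hxC 0 le_rfl) t⁻¹
      (inv_pos.2 ht0) (inv_lt_one_of_one_lt₀ ht1) ?_).1
    rw [smul_zero, add_zero, smul_smul, inv_mul_cancel₀ ht0.ne', one_smul]

theorem IsFace.add_mem (hC : ∀ z ∈ C, ∀ t : ℝ, 0 ≤ t → t • z ∈ C) (hF : IsFace C F)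
    {x z : E} (hx : x ∈ F) (hz : z ∈ F) : x + z ∈ F := by
  have hmid := hF.2.2.1 hx hz (by norm_num : (0 : ℝ) ≤ 1 / 2) (by norm_num : (0 : ℝ) ≤ 1 / 2)
    (by norm_num)
  convert hF.smul_mem hC hmid zero_le_two using 1
  module

end ConeFace

namespace SecondOrderCone

variable {m : ℕ}

/-- `z ↦ (0, ẑ)`. -/
noncomputable def hat : EuclideanSpace ℝ (Fin m) →ₗ[ℝ] EuclideanSpace ℝ (Fin m) where
  toFun z := WithLp.toLp 2 fun i => if (i : ℕ) = 0 then 0 else z i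
  map_add' x y := by ext i; by_cases h : (i : ℕ) = 0 <;> simp [h]
  map_smul' c x := by ext i; by_cases h : (i : ℕ) = 0 <;> simp [h]

theorem hat_apply (z : EuclideanSpace ℝ (Fin m)) (i : Fin m) :
    hat z i = if (i : ℕ) = 0 then 0 else z i :=
  rfl

theorem hatNorm_eq_norm_hat (z : EuclideanSpace ℝ (Fin m)) : hatNorm z = ‖hat z‖ := by
  rw [EuclideanSpace.norm_eq, hatNorm]
  congr 1
  refine Finset.sum_congr rfl fun i _ => ?_
  by_cases h : (i : ℕ) = 0 <;> simp [hat_apply, h]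

theorem inner_hat_left (x z : EuclideanSpace ℝ (Fin m)) : ⟪hat x, z⟫ = ⟪hat x, hat z⟫ := by
  simp only [PiLp.inner_apply, RCLike.inner_apply, conj_trivial]
  refine Finset.sum_congr rfl fun i _ => ?_
  by_cases h : (i : ℕ) = 0 <;> simp [hat_apply, h]

variable [NeZero m]

theorem mem_iff (z : EuclideanSpace ℝ (Fin m)) : z ∈ SOC m ↔ ‖hat z‖ ≤ z 0 := by
  rw [SOC, Set.mem_ofPred_eq, hatNorm_eq_norm_hat]

theorem smul_mem_of_nonneg : ∀ z ∈ SOC m, ∀ t : ℝ, 0 ≤ t → t • z ∈ SOC m := by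
  intro z hz t ht
  rw [mem_iff] at *
  rw [map_smul, norm_smul, Real.norm_of_nonneg ht, PiLp.smul_apply, smul_eq_mul]
  exact mul_le_mul_of_nonneg_left hz ht

theorem ext_hat {x z : EuclideanSpace ℝ (Fin m)} (h0 : x 0 = z 0) (hhat : hat x = hat z) :
    x = z := by
  ext i
  by_cases hi : (i : ℕ) = 0
  · rwa [show i = 0 from Fin.ext hi]
  · simpa [hat_apply, hi] using congrArg (· i) hhat

theorem eq_zero_of_apply_zero_nonpos {z : EuclideanSpace ℝ (Fin m)} (hz : z ∈ SOC m)
    (h0 : z 0 ≤ 0) : z = 0 := by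
  rw [mem_iff] at hz
  have hhat : hat z = 0 := norm_le_zero_iff.1 (hz.trans h0)
  exact ext_hat (by simpa using le_antisymm h0 ((norm_nonneg _).trans hz)) (by simp [hhat])

theorem exists_sub_smul_mem {y z : EuclideanSpace ℝ (Fin m)} (hy : ‖hat y‖ < y 0)
    (hz : z ∈ SOC m) : ∃ t : ℝ, 0 < t ∧ y - t • z ∈ SOC m := by
  rw [mem_iff] at hz
  have hz0 := (norm_nonneg _).trans hz
  set t := (y 0 - ‖hat y‖) / (2 * z 0 + 1)
  have ht : 0 < t := div_pos (by linarith) (by linarith)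
  have hgap : t * (2 * z 0 + 1) = y 0 - ‖hat y‖ := div_mul_cancel₀ _ (by linarith)
  refine ⟨t, ht, (mem_iff _).2 ?_⟩
  rw [map_sub, map_smul, PiLp.sub_apply, PiLp.smul_apply, smul_eq_mul]
  calc ‖hat y - t • hat z‖ ≤ ‖hat y‖ + t * ‖hat z‖ := by
        simpa [norm_smul, Real.norm_of_nonneg ht.le] using norm_sub_le (hat y) (t • hat z)
    _ ≤ y 0 - t * z 0 := by nlinarith

theorem hat_single_zero : hat (EuclideanSpace.single (0 : Fin m) (1 : ℝ)) = 0 := by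
  ext i
  by_cases hi : (i : ℕ) = 0 <;> simp [hat_apply, hi, Fin.ext_iff]

theorem single_zero_mem : EuclideanSpace.single (0 : Fin m) (1 : ℝ) ∈ SOC m := by
  simp [mem_iff, hat_single_zero]

/-- `(-x₀, x̂)`: the outward normal direction of `Kₘ` at a boundary point `x`. -/
noncomputable def polar (x : EuclideanSpace ℝ (Fin m)) : EuclideanSpace ℝ (Fin m) :=
  hat x - x 0 • EuclideanSpace.single 0 1

theorem inner_polar (x z : EuclideanSpace ℝ (Fin m)) :
    ⟪polar x, z⟫ = ⟪hat x, hat z⟫ - x 0 * z 0 := by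
  rw [polar, inner_sub_left, inner_hat_left, real_inner_smul_left,
    EuclideanSpace.inner_single_left]
  simp

theorem inner_polar_nonpos {x z : EuclideanSpace ℝ (Fin m)} (hx : x ∈ SOC m) (hz : z ∈ SOC m) :
    ⟪polar x, z⟫ ≤ 0 := by
  rw [mem_iff] at hx hz
  rw [inner_polar, sub_nonpos]
  calc ⟪hat x, hat z⟫ ≤ ‖hat x‖ * ‖hat z‖ := real_inner_le_norm _ _
    _ ≤ x 0 * z 0 := mul_le_mul hx hz (norm_nonneg _) ((norm_nonneg _).trans hx)

theorem smul_eq_smul_of_inner_polar_eq_zero {x z : EuclideanSpace ℝ (Fin m)} (hx : x ∈ SOC m)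
    (hz : z ∈ SOC m) (h : ⟪polar x, z⟫ = 0) : x 0 • z = z 0 • x := by
  rw [mem_iff] at hx hz
  rw [inner_polar, sub_eq_zero] at h
  have hx0 := (norm_nonneg _).trans hx
  have hz0 := (norm_nonneg _).trans hz
  -- `‖x₀ ẑ - z₀ x̂‖² = x₀² ‖ẑ‖² - 2 x₀² z₀² + z₀² ‖x̂‖² ≤ 0`
  have hsq : ‖x 0 • hat z - z 0 • hat x‖ ^ 2 ≤ 0 := by
    rw [norm_sub_sq_real, norm_smul, norm_smul, real_inner_smul_left, real_inner_smul_right,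
      real_inner_comm, h, Real.norm_of_nonneg hx0, Real.norm_of_nonneg hz0]
    nlinarith [mul_le_mul_of_nonneg_left (pow_le_pow_left₀ (norm_nonneg _) hz 2) (sq_nonneg (x 0)),
      mul_le_mul_of_nonneg_left (pow_le_pow_left₀ (norm_nonneg _) hx 2) (sq_nonneg (z 0))]
  refine ext_hat (by simp [mul_comm]) ?_
  rw [map_smul, map_smul, ← sub_eq_zero, ← norm_eq_zero]
  exact (pow_eq_zero_iff two_ne_zero).1 (le_antisymm hsq (sq_nonneg _))

theorem inner_polar_eq_zero_of_add {x z : EuclideanSpace ℝ (Fin m)} (hx : ‖hat x‖ = x 0)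
    (hz : ‖hat z‖ = z 0) (hxz : ‖hat (x + z)‖ = (x + z) 0) : ⟪polar x, z⟫ = 0 := by
  rw [map_add, PiLp.add_apply] at hxz
  have hsq := congrArg (· ^ 2) hxz
  simp only [norm_add_sq_real, hx, hz] at hsq
  rw [inner_polar]
  linarith

theorem inter_polar_single_zero :
    SOC m ∩ {z | ⟪polar (EuclideanSpace.single 0 1), z⟫ = 0} = {0} := by
  ext z
  simp only [Set.mem_inter_iff, Set.mem_ofPred_eq, Set.mem_singleton_iff, inner_polar,
    hat_single_zero, inner_zero_left, PiLp.single_apply, if_pos, one_mul, zero_sub,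
    neg_eq_zero]
  constructor
  · rintro ⟨hz, hz0⟩
    exact eq_zero_of_apply_zero_nonpos hz hz0.le
  · rintro rfl
    exact ⟨by simpa using smul_mem_of_nonneg _ single_zero_mem 0 le_rfl, rfl⟩

end SecondOrderCone

open SecondOrderCone

section FaceOfSOC

variable {m : ℕ} [NeZero m] {F : Set (EuclideanSpace ℝ (Fin m))}

theorem IsFace.eq_SOC_of_interior (hF : IsFace (SOC m) F) {y : EuclideanSpace ℝ (Fin m)}
    (hyF : y ∈ F) (hy : ‖hat y‖ < y 0) : F = SOC m := by
  refine hF.2.1.antisymm fun z hz => ?_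
  obtain ⟨t, ht, hyz⟩ := exists_sub_smul_mem hy hz
  have htz := hF.mem_of_sub_mem smul_mem_of_nonneg hyF (smul_mem_of_nonneg z hz t ht.le) hyz
  simpa [smul_smul, inv_mul_cancel₀ ht.ne'] using
    hF.smul_mem smul_mem_of_nonneg htz (inv_nonneg.2 ht.le)

theorem IsFace.eq_inter_polar (hF : IsFace (SOC m) F) (hbd : ∀ y ∈ F, ‖hat y‖ = y 0)
    {x : EuclideanSpace ℝ (Fin m)} (hxF : x ∈ F) (hx : x ≠ 0) :
    F = SOC m ∩ {z | ⟪polar x, z⟫ = 0} := by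
  have hxK := hF.2.1 hxF
  ext z
  constructor
  · intro hzF
    exact ⟨hF.2.1 hzF, inner_polar_eq_zero_of_add (hbd x hxF) (hbd z hzF)
      (hbd _ (hF.add_mem smul_mem_of_nonneg hxF hzF))⟩
  · rintro ⟨hz, hperp⟩
    have hx0 : 0 < x 0 := lt_of_not_ge fun h => hx (eq_zero_of_apply_zero_nonpos hxK h)
    have hz0 : 0 ≤ z 0 := (norm_nonneg _).trans ((mem_iff z).1 hz)
    have hzx : z = (z 0 / x 0) • x := by
      rw [div_eq_inv_mul, mul_smul, ← smul_eq_smul_of_inner_polar_eq_zero hxK hz hperp, smul_smul,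
        inv_mul_cancel₀ hx0.ne', one_smul]
    rw [hzx]
    exact hF.smul_mem smul_mem_of_nonneg hxF (div_nonneg hz0 hx0.le)

end FaceOfSOC

theorem stmt10_general (m : ℕ) [NeZero m] (F : Set (EuclideanSpace ℝ (Fin m)))
    (hF : IsFace (SOC m) F) :
    ∃ η : EuclideanSpace ℝ (Fin m), (∀ y ∈ SOC m, ⟪η, y⟫ ≤ 0) ∧
      F = SOC m ∩ {z | ⟪η, z⟫ = 0} := by
  by_cases hint : ∃ y ∈ F, ‖hat y‖ < y 0
  · obtain ⟨y, hyF, hy⟩ := hint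
    exact ⟨0, by simp, by simpa using hF.eq_SOC_of_interior hyF hy⟩
  push Not at hint
  have hbd : ∀ y ∈ F, ‖hat y‖ = y 0 := fun y hy =>
    le_antisymm ((mem_iff y).1 (hF.2.1 hy)) (hint y hy)
  by_cases hnz : ∃ x ∈ F, x ≠ 0
  · obtain ⟨x, hxF, hx⟩ := hnz
    exact ⟨polar x, fun y => inner_polar_nonpos (hF.2.1 hxF), hF.eq_inter_polar hbd hxF hx⟩
  push Not at hnz
  refine ⟨polar (EuclideanSpace.single 0 1), fun y => inner_polar_nonpos single_zero_mem, ?_⟩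
  rw [inter_polar_single_zero, Set.eq_singleton_iff_unique_mem]
  exact ⟨hF.zero_mem smul_mem_of_nonneg, hnz⟩

/-- The second-order cone is facially exposed: every face `F` of `Kₘ` is of the form
`F = Kₘ ∩ {η}⊥` for some `η` in the polar cone `Kₘ°`. -/
theorem stmt10 (m : ℕ) [NeZero m] (hm : 2 ≤ m) (F : Set (EuclideanSpace ℝ (Fin m)))
    (hF : IsFace (SOC m) F) :
    ∃ η : EuclideanSpace ℝ (Fin m), (∀ y ∈ SOC m, ⟪η, y⟫ ≤ 0) ∧
      F = SOC m ∩ {z | ⟪η, z⟫ = 0} :=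
  stmt10_general m F hF
end

section
/- Let G(x) = [[x₂, x₁²],[x₁², x₂]] for x = (x₁,x₂) ∈ ℝ² and x̄ = (0,0). Then Robinson's CQ holds at x̄ (take d = (0,1), giving G(x̄)+DG(x̄)d = I ∈ int(S²₊)), but the span of {∇G₁₂(x), ∇G₂₂(x)} = {(2x₁, 0), (0,1)} has dimension 1 at x̄ and dimension 2 for every x with x₁ ≠ 0; hence the facial constant rank property fails at x̄. -/
attribute [local instance] Matrix.normedAddCommGroup Matrix.normedSpace

/-- The constraint map `G(x) = [[x₂, x₁²], [x₁², x₂]]`. -/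
noncomputable def G18 : ℝ × ℝ → Matrix (Fin 2) (Fin 2) ℝ :=
  fun x => !![x.2, x.1 ^ 2; x.1 ^ 2, x.2]

open Module Submodule

lemma G18_eq_smul_one_add : G18 = fun x : ℝ × ℝ =>
    x.2 • (1 : Matrix (Fin 2) (Fin 2) ℝ) + (x.1 * x.1) • !![(0 : ℝ), 1; 1, 0] := by
  funext x
  ext i j
  fin_cases i <;> fin_cases j <;> simp [G18, sq]

lemma hasFDerivAt_G18 (x : ℝ × ℝ) :
    HasFDerivAt G18
      ((ContinuousLinearMap.snd ℝ ℝ ℝ).smulRight (1 : Matrix (Fin 2) (Fin 2) ℝ) +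
        (x.1 • ContinuousLinearMap.fst ℝ ℝ ℝ + x.1 • ContinuousLinearMap.fst ℝ ℝ ℝ).smulRight
          !![(0 : ℝ), 1; 1, 0]) x := by
  rw [G18_eq_smul_one_add]
  exact (hasFDerivAt_snd.smul_const _).add
    (((hasFDerivAt_fst (p := x)).mul (hasFDerivAt_fst (p := x))).smul_const _)

lemma fderiv_G18_apply_zero_one (x : ℝ × ℝ) : fderiv ℝ G18 x (0, 1) = 1 := by
  simp [(hasFDerivAt_G18 x).fderiv]

lemma finrank_span_zero_pair {K : Type*} [Field K] :
    finrank K (span K ({(0, 0), (0, 1)} : Set (K × K))) = 1 := by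
  rw [Prod.mk_zero_zero, span_insert_zero, finrank_span_singleton]
  simp

lemma finrank_span_pair_of_ne_zero {K : Type*} [Field K] {a : K} (ha : a ≠ 0) :
    finrank K (span K ({(a, 0), (0, 1)} : Set (K × K))) = 2 := by
  have htop : span K ({(a, 0), (0, 1)} : Set (K × K)) = ⊤ := by
    refine eq_top_iff.2 fun ⟨b, c⟩ _ => mem_span_pair.2 ⟨b / a, c, ?_⟩
    simp [ha]
  rw [htop, finrank_top, finrank_prod, finrank_self]

/-- At `x̄ = (0,0)`: Robinson's CQ holds (with `d = (0,1)`,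
`G(x̄) + DG(x̄)d ∈ int(S²₊)` i.e. is positive definite), but the span of
`{∇G₁₂(x), ∇G₂₂(x)} = {(2x₁, 0), (0, 1)}` has dimension 1 at `x̄` while having
dimension 2 for every `x` with `x₁ ≠ 0`: the facial constant rank property fails. -/
theorem stmt18 :
    (G18 (0, 0) + fderiv ℝ G18 (0, 0) ((0 : ℝ), (1 : ℝ))).PosDef ∧
    Module.finrank ℝ
      (Submodule.span ℝ ({(2 * (0 : ℝ), (0 : ℝ)), ((0 : ℝ), (1 : ℝ))} : Set (ℝ × ℝ))) = 1 ∧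
    ∀ x : ℝ × ℝ, x.1 ≠ 0 →
      Module.finrank ℝ
        (Submodule.span ℝ ({(2 * x.1, (0 : ℝ)), ((0 : ℝ), (1 : ℝ))} : Set (ℝ × ℝ))) = 2 := by
  refine ⟨?_, ?_, fun x hx => finrank_span_pair_of_ne_zero (mul_ne_zero two_ne_zero hx)⟩
  · have hG : G18 (0, 0) = 0 := by rw [G18_eq_smul_one_add]; simp
    rw [hG, fderiv_G18_apply_zero_one, zero_add]
    exact Matrix.PosDef.one
  · rw [mul_zero]
    exact finrank_span_zero_pair
end

section
/- For the nonlinear second-order cone problem: minimize −x subject to g(x) = (x, x + x²) ∈ K₂, the point x̄ = 0 is the unique global minimizer, the set H(x̄) = Dg(x̄)ᵀ[K₂°] is closed, but x̄ is not a KKT point: there is no λ ∈ K₂° with ⟨g(x̄), λ⟩ = 0 and −1 + λ₁ + λ₂ = 0. -/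
/-- The two-dimensional second-order cone `K₂ = {(z₁, z₂) : z₁ ≥ |z₂|}`. -/
def K2 : Set (ℝ × ℝ) := {z | |z.2| ≤ z.1}

/-- The constraint map `g(x) = (x, x + x²)`. -/
def g19 : ℝ → ℝ × ℝ := fun x => (x, x + x ^ 2)

/-- For: minimize `-x` s.t. `g(x) = (x, x + x²) ∈ K₂`, the point `x̄ = 0` is the unique
global minimizer, `H(x̄) = Dg(x̄)ᵀ[K₂°] = {λ₁ + λ₂ : λ ∈ -K₂}` is closed, but `x̄` is not
a KKT point: no `λ ∈ K₂°` satisfies `⟨g(x̄), λ⟩ = 0` and `-1 + λ₁ + λ₂ = 0`. -/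
theorem stmt19 :
    (g19 0 ∈ K2 ∧ ∀ x : ℝ, g19 x ∈ K2 → x ≠ 0 → -(0 : ℝ) < -x) ∧
    IsClosed {t : ℝ | ∃ lam : ℝ × ℝ, -lam ∈ K2 ∧ t = lam.1 + lam.2} ∧
    ¬ ∃ lam : ℝ × ℝ, -lam ∈ K2 ∧ (g19 0).1 * lam.1 + (g19 0).2 * lam.2 = 0 ∧
      -1 + lam.1 + lam.2 = 0 := by
  refine ⟨⟨by simp [g19, K2], ?_⟩, ?_, ?_⟩
  · intro x hx hne
    exfalso
    apply hne
    simp only [g19, K2, Set.mem_setOf_eq] at hx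
    rcases abs_le.mp hx with ⟨h1, h2⟩
    nlinarith [sq_nonneg x]
  · have : {t : ℝ | ∃ lam : ℝ × ℝ, -lam ∈ K2 ∧ t = lam.1 + lam.2} = Set.Iic 0 := by
      ext t
      simp only [Set.mem_setOf_eq, Set.mem_Iic, K2]
      constructor
      · rintro ⟨lam, hlam, rfl⟩
        rcases abs_le.mp hlam with ⟨h1, h2⟩
        simp at h1 h2
        linarith
      · intro ht
        exact ⟨(t, 0), by simpa [abs_le] using ht, by simp⟩
    rw [this]; exact isClosed_Iic
  · rintro ⟨lam, hlam, -, hsum⟩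
    simp only [K2, Set.mem_setOf_eq] at hlam
    rcases abs_le.mp hlam with ⟨h1, h2⟩
    simp at h1 h2
    linarith
end
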